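/- arXiv:2403.14011 — 10 statements merged into one kernel-verified Lean document; each statement's English description precedes it below -/
import Mathlib

section
/- If ν^{HV,HO} > ν^{AV,LO} (i.e. n_HO/n_LO > 1/μ), then for any two feasible equilibrium flow vectors f, f⁺ on the equilibrium simplex S (both satisfying f₁^{HV,LO}+f₁^{HV,HO}+μ f₁^{AV,LO} = φ₁* − δ^{AV,HO} and the demand constraints), if f⁺ assigns the maximal possible HV,LO flow and minimal possible HV,HO flow to lane 1, then the total commuter delay satisfies J(f) ≤ J(f⁺). -/
/-- Case 1) of Theorem 3 (worst-case equilibrium when ν^{HV,HO} > ν^{AV,LO}).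
A point of the equilibrium simplex `S` is encoded by its lane-1 flows
`(f₁^{HV,LO}, f₁^{HV,HO}, f₁^{AV,LO})`; lane-2 flows are the demand remainders.
If `fp` assigns the maximal possible HV,LO flow and the minimal possible HV,HO
flow to lane 1, then `J f ≤ J fp` for every `f ∈ S`. -/
theorem worst_case_equilibrium_HVHO_gt_AVLO
    (nLO nHO μ D1v D2v τ dvAVHO dL dH dA Φ : ℝ)
    (hnLO : 0 < nLO) (hn : nLO < nHO) (hμ0 : 0 < μ) (hμ1 : μ < 1)
    (hmob : nHO / nLO > 1 / μ)
    (hτ : 0 < τ) (hD : D1v + τ = D2v)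
    (hdvAVHO : 0 ≤ dvAVHO)
    (S : Set (ℝ × ℝ × ℝ))
    (hS : S = {f | 0 ≤ f.1 ∧ f.1 ≤ dL ∧ 0 ≤ f.2.1 ∧ f.2.1 ≤ dH ∧
        0 ≤ f.2.2 ∧ f.2.2 ≤ dA ∧ f.1 + f.2.1 + μ * f.2.2 = Φ})
    (J : ℝ × ℝ × ℝ → ℝ)
    (hJ : J = fun f => (nLO * (f.1 + f.2.2) + nHO * (f.2.1 + dvAVHO)) * D1v
        + (nLO * ((dL - f.1) + (dA - f.2.2)) + nHO * (dH - f.2.1)) * D2v)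
    (fp : ℝ × ℝ × ℝ) (hfp : fp ∈ S)
    (hmax : ∀ f ∈ S, f.1 ≤ fp.1) (hmin : ∀ f ∈ S, fp.2.1 ≤ f.2.1) :
    ∀ f ∈ S, J f ≤ J fp := by
  intro f hf
  subst hS hJ
  obtain ⟨h1, h2, h3, h4, h5, h6, h7⟩ := hf
  obtain ⟨g1, g2, g3, g4, g5, g6, g7⟩ := hfp
  have ha : f.1 ≤ fp.1 := hmax f ⟨h1, h2, h3, h4, h5, h6, h7⟩
  have hb : fp.2.1 ≤ f.2.1 := hmin f ⟨h1, h2, h3, h4, h5, h6, h7⟩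
  have hk : nLO < μ * nHO := by
    have := (div_lt_div_iff₀ hμ0 hnLO).mp hmob
    linarith
  have hkey : 0 ≤ μ * (nLO * ((f.1 - fp.1) + (f.2.2 - fp.2.2)) + nHO * (f.2.1 - fp.2.1)) := by
    nlinarith [mul_nonneg (sub_nonneg.mpr ha) (mul_nonneg hnLO.le (by linarith : (0:ℝ) ≤ 1 - μ)),
      mul_nonneg (sub_nonneg.mpr hb) (by linarith : (0:ℝ) ≤ μ * nHO - nLO)]
  have hkey2 : 0 ≤ nLO * ((f.1 - fp.1) + (f.2.2 - fp.2.2)) + nHO * (f.2.1 - fp.2.1) :=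
    nonneg_of_mul_nonneg_right hkey hμ0
  simp only
  nlinarith [mul_nonneg hτ.le hkey2]
end

section
/- If ν^{HV,HO} < ν^{AV,LO} (i.e. n_HO/n_LO < 1/μ), then among all equilibria on the simplex S, the one assigning maximal HV,LO flow and minimal AV,LO flow to lane 1 maximizes the total commuter delay J, and the one assigning minimal HV,LO flow and maximal AV,LO flow to lane 1 minimizes J. -/
/-- Case 2) of Theorem 3 (ν^{HV,HO} < ν^{AV,LO}): among all equilibria of the
simplex `S`, the one assigning maximal HV,LO flow and minimal AV,LO flow to
lane 1 maximizes the total commuter delay `J`, and the one assigning minimal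
HV,LO flow and maximal AV,LO flow to lane 1 minimizes `J`. -/
theorem best_worst_case_equilibrium_HVHO_lt_AVLO
    (nLO nHO μ D1v D2v τ dvAVHO dL dH dA Φ : ℝ)
    (hnLO : 0 < nLO) (hn : nLO < nHO) (hμ0 : 0 < μ) (hμ1 : μ < 1)
    (hmob : nHO / nLO < 1 / μ)
    (hτ : 0 < τ) (hD : D1v + τ = D2v)
    (hdvAVHO : 0 ≤ dvAVHO)
    (S : Set (ℝ × ℝ × ℝ))
    (hS : S = {f | 0 ≤ f.1 ∧ f.1 ≤ dL ∧ 0 ≤ f.2.1 ∧ f.2.1 ≤ dH ∧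
        0 ≤ f.2.2 ∧ f.2.2 ≤ dA ∧ f.1 + f.2.1 + μ * f.2.2 = Φ})
    (J : ℝ × ℝ × ℝ → ℝ)
    (hJ : J = fun f => (nLO * (f.1 + f.2.2) + nHO * (f.2.1 + dvAVHO)) * D1v
        + (nLO * ((dL - f.1) + (dA - f.2.2)) + nHO * (dH - f.2.1)) * D2v)
    (fp fm : ℝ × ℝ × ℝ) (hfp : fp ∈ S) (hfm : fm ∈ S)
    (hpmax : ∀ f ∈ S, f.1 ≤ fp.1) (hpmin : ∀ f ∈ S, fp.2.2 ≤ f.2.2)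
    (hmmin : ∀ f ∈ S, fm.1 ≤ f.1)  (hmmax : ∀ f ∈ S, f.2.2 ≤ fm.2.2) :
    (∀ f ∈ S, J f ≤ J fp) ∧ (∀ f ∈ S, J fm ≤ J f) := by
  subst hS hJ
  have hμn : μ * nHO < nLO := by
    rw [div_lt_div_iff₀ hnLO hμ0] at hmob
    nlinarith
  have key : ∀ g h : ℝ × ℝ × ℝ,
      g ∈ {f : ℝ × ℝ × ℝ | 0 ≤ f.1 ∧ f.1 ≤ dL ∧ 0 ≤ f.2.1 ∧ f.2.1 ≤ dH ∧
        0 ≤ f.2.2 ∧ f.2.2 ≤ dA ∧ f.1 + f.2.1 + μ * f.2.2 = Φ} →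
      h ∈ {f : ℝ × ℝ × ℝ | 0 ≤ f.1 ∧ f.1 ≤ dL ∧ 0 ≤ f.2.1 ∧ f.2.1 ≤ dH ∧
        0 ≤ f.2.2 ∧ f.2.2 ≤ dA ∧ f.1 + f.2.1 + μ * f.2.2 = Φ} →
      g.1 ≤ h.1 → h.2.2 ≤ g.2.2 →
      (nLO * (g.1 + g.2.2) + nHO * (g.2.1 + dvAVHO)) * D1v
        + (nLO * ((dL - g.1) + (dA - g.2.2)) + nHO * (dH - g.2.1)) * D2v ≤
      (nLO * (h.1 + h.2.2) + nHO * (h.2.1 + dvAVHO)) * D1v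
        + (nLO * ((dL - h.1) + (dA - h.2.2)) + nHO * (dH - h.2.1)) * D2v := by
    rintro g h ⟨-, -, -, -, -, -, hg7⟩ ⟨-, -, -, -, -, -, hh7⟩ h1 h3
    have e2 : g.2.1 - h.2.1 = (h.1 - g.1) + μ * (h.2.2 - g.2.2) := by linarith
    have e3 : τ * nHO * (g.2.1 - h.2.1) = τ * nHO * ((h.1 - g.1) + μ * (h.2.2 - g.2.2)) := by
      rw [e2]
    nlinarith [e3, mul_nonneg hτ.le (mul_nonneg (by linarith : (0:ℝ) ≤ nHO - nLO) (by linarith : (0:ℝ) ≤ h.1 - g.1)),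
      mul_nonneg hτ.le (mul_nonneg (by linarith : (0:ℝ) ≤ nLO - μ * nHO) (by linarith : (0:ℝ) ≤ g.2.2 - h.2.2))]
  exact ⟨fun f hf => key f fp hf hfp (hpmax f hf) (hpmin f hf),
    fun f hf => key fm f hfm hf (hmmin f hf) (hmmax f hf)⟩
end

section
/- If ν^{HV,HO} = ν^{AV,LO} (i.e. n_HO/n_LO = 1/μ), then the total commuter delay over the equilibrium simplex S depends only on the lane-1 flow of HV,LO vehicles: J is maximized when f₁^{HV,LO} is maximal over S and minimized when f₁^{HV,LO} is minimal over S. -/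
/-- Case 3) of Theorem 3 (ν^{HV,HO} = ν^{AV,LO}, i.e. n_HO = n_LO/μ): the total
commuter delay over the equilibrium simplex depends only on the lane-1 HV,LO
flow; it is maximized when `f₁^{HV,LO}` is maximal over `S` and minimized when
`f₁^{HV,LO}` is minimal over `S`. -/
theorem best_worst_case_equilibrium_HVHO_eq_AVLO
    (nLO nHO μ D1v D2v τ dvAVHO dL dH dA Φ : ℝ)
    (hnLO : 0 < nLO) (hn : nLO < nHO) (hμ0 : 0 < μ) (hμ1 : μ < 1)
    (hmob : nHO = nLO / μ)
    (hτ : 0 < τ) (hD : D1v + τ = D2v)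
    (hdvAVHO : 0 ≤ dvAVHO)
    (S : Set (ℝ × ℝ × ℝ))
    (hS : S = {f | 0 ≤ f.1 ∧ f.1 ≤ dL ∧ 0 ≤ f.2.1 ∧ f.2.1 ≤ dH ∧
        0 ≤ f.2.2 ∧ f.2.2 ≤ dA ∧ f.1 + f.2.1 + μ * f.2.2 = Φ})
    (J : ℝ × ℝ × ℝ → ℝ)
    (hJ : J = fun f => (nLO * (f.1 + f.2.2) + nHO * (f.2.1 + dvAVHO)) * D1v
        + (nLO * ((dL - f.1) + (dA - f.2.2)) + nHO * (dH - f.2.1)) * D2v)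
    (fp fm : ℝ × ℝ × ℝ) (hfp : fp ∈ S) (hfm : fm ∈ S)
    (hpmax : ∀ f ∈ S, f.1 ≤ fp.1) (hmmin : ∀ f ∈ S, fm.1 ≤ f.1) :
    (∀ f ∈ S, J f ≤ J fp) ∧ (∀ f ∈ S, J fm ≤ J f) := by
  subst hS hJ hmob
  have key : ∀ f ∈ {f : ℝ × ℝ × ℝ | 0 ≤ f.1 ∧ f.1 ≤ dL ∧ 0 ≤ f.2.1 ∧ f.2.1 ≤ dH ∧
      0 ≤ f.2.2 ∧ f.2.2 ≤ dA ∧ f.1 + f.2.1 + μ * f.2.2 = Φ},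
      ∀ g ∈ {f : ℝ × ℝ × ℝ | 0 ≤ f.1 ∧ f.1 ≤ dL ∧ 0 ≤ f.2.1 ∧ f.2.1 ≤ dH ∧
      0 ≤ f.2.2 ∧ f.2.2 ≤ dA ∧ f.1 + f.2.1 + μ * f.2.2 = Φ}, f.1 ≤ g.1 →
      (nLO * (f.1 + f.2.2) + nLO / μ * (f.2.1 + dvAVHO)) * D1v
        + (nLO * ((dL - f.1) + (dA - f.2.2)) + nLO / μ * (dH - f.2.1)) * D2v
      ≤ (nLO * (g.1 + g.2.2) + nLO / μ * (g.2.1 + dvAVHO)) * D1v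
        + (nLO * ((dL - g.1) + (dA - g.2.2)) + nLO / μ * (dH - g.2.1)) * D2v := by
    rintro f ⟨-, -, -, -, -, -, hf⟩ g ⟨-, -, -, -, -, -, hg⟩ hle
    rw [← sub_nonneg, ← hD]
    set m := nLO / μ with hmdef
    have hm : μ * m = nLO := by rw [hmdef]; field_simp
    have hkey :
        (nLO * (g.1 + g.2.2) + m * (g.2.1 + dvAVHO)) * D1v
          + (nLO * ((dL - g.1) + (dA - g.2.2)) + m * (dH - g.2.1)) * (D1v + τ)
        - ((nLO * (f.1 + f.2.2) + m * (f.2.1 + dvAVHO)) * D1v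
          + (nLO * ((dL - f.1) + (dA - f.2.2)) + m * (dH - f.2.1)) * (D1v + τ))
        = m * (1 - μ) * τ * (g.1 - f.1) := by
      linear_combination (m * (D1v + τ) - m * D1v) * hf + (m * D1v - m * (D1v + τ)) * hg
        + ((dL - g.1 + (dA - g.2.2)) * (D1v + τ) + (g.1 + g.2.2) * D1v
          - (dL - f.1 + (dA - f.2.2)) * (D1v + τ) - (f.1 + f.2.2) * D1v) * hm.symm
    have hmpos : 0 < m := div_pos hnLO hμ0
    nlinarith [mul_nonneg (mul_nonneg (mul_nonneg hmpos.le (by linarith : (0:ℝ) ≤ 1 - μ)) hτ.le) (by linarith : (0:ℝ) ≤ g.1 - f.1)]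
  exact ⟨fun f hf => key f hf fp hfp (hpmax f hf), fun f hf => key fm hfm f hf (hmmin f hf)⟩
end

section
/- If the toll satisfies τ ≥ D₂(Σ_{p∈P} δ^p − δ^{AV,HO}) − D₁(δ^{AV,HO}), then the unique lane choice equilibrium has all decision-making vehicles on lane 2, i.e. f₁^p = 0 for all p ∈ {HV,LO; HV,HO; AV,LO}. -/
/-- Condition 1) of Theorem 2: if the toll satisfies
`τ ≥ D₂(Sδ − δ^{AV,HO}) − D₁(δ^{AV,HO})`, then at any lane choice (Wardrop)
equilibrium all decision-making vehicles travel on lane 2, i.e. `f₁^p = 0`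
for all `p ∈ {HV,LO; HV,HO; AV,LO}`. -/
theorem all_on_lane_two_of_high_toll
    (D1 D2 : ℝ → ℝ) (hD1c : Continuous D1) (hD2c : Continuous D2)
    (hD1 : StrictMono D1) (hD2 : StrictMono D2)
    (μ τ δAVHO dL dH dA : ℝ)
    (hμ0 : 0 < μ) (hμ1 : μ < 1) (hτ : 0 < τ)
    (hδAVHO : 0 < δAVHO) (hdL : 0 < dL) (hdH : 0 < dH) (hdA : 0 < dA)
    -- total effective demand
    (Sδ : ℝ) (hSδ : Sδ = dL + dH + μ * dA + δAVHO)
    (htoll : τ ≥ D2 (Sδ - δAVHO) - D1 δAVHO)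
    -- a feasible flow split
    (f1L f1H f1A f2L f2H f2A : ℝ)
    (h1L : 0 ≤ f1L) (h1H : 0 ≤ f1H) (h1A : 0 ≤ f1A)
    (h2L : 0 ≤ f2L) (h2H : 0 ≤ f2H) (h2A : 0 ≤ f2A)
    (hcL : f1L + f2L = dL) (hcH : f1H + f2H = dH) (hcA : f1A + f2A = dA)
    -- effective lane flows and costs
    (φ1 φ2 C1 C2 : ℝ)
    (hφ1 : φ1 = f1L + f1H + μ * f1A + δAVHO)
    (hφ2 : φ2 = f2L + f2H + μ * f2A)
    (hC1 : C1 = D1 φ1 + τ) (hC2 : C2 = D2 φ2)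
    -- Wardrop equilibrium conditions
    (hwL1 : f1L * (C1 - C2) ≤ 0) (hwL2 : f2L * (C2 - C1) ≤ 0)
    (hwH1 : f1H * (C1 - C2) ≤ 0) (hwH2 : f2H * (C2 - C1) ≤ 0)
    (hwA1 : f1A * (C1 - C2) ≤ 0) (hwA2 : f2A * (C2 - C1) ≤ 0) :
    f1L = 0 ∧ f1H = 0 ∧ f1A = 0 := by
  have hφ2le : φ2 ≤ Sδ - δAVHO := by
    have : μ * f2A ≤ μ * dA := by
      apply mul_le_mul_of_nonneg_left _ hμ0.le
      linarith
    rw [hφ2, hSδ]; linarith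
  have hC2le : C2 ≤ D1 δAVHO + τ := by
    rw [hC2]
    have h1 : D2 φ2 ≤ D2 (Sδ - δAVHO) := hD2.monotone hφ2le
    linarith
  have key : ∀ f c : ℝ, 0 < c → 0 ≤ f → f * (C1 - C2) ≤ 0 →
      f * c + δAVHO ≤ φ1 → f = 0 := by
    intro f c hc hf hw hle
    by_contra hne
    have hfpos : 0 < f := lt_of_le_of_ne hf (Ne.symm hne)
    have hCle : C1 ≤ C2 := by
      by_contra h'
      push_neg at h'
      linarith [mul_pos hfpos (sub_pos.mpr h')]
    have hφ1gt : δAVHO < φ1 := by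
      have := mul_pos hfpos hc
      linarith
    have : D1 δAVHO < D1 φ1 := hD1 hφ1gt
    rw [hC1] at hCle
    linarith
  have hμA : μ * f1A ≥ 0 := mul_nonneg hμ0.le h1A
  refine ⟨key f1L 1 one_pos h1L hwL1 (by rw [hφ1, mul_one]; linarith),
    key f1H 1 one_pos h1H hwH1 (by rw [hφ1, mul_one]; linarith),
    key f1A μ hμ0 h1A hwA1 (by rw [hφ1, mul_comm f1A μ]; linarith)⟩
end

section
/- If the toll satisfies τ ≤ D₂(0) − D₁(Σ_{p∈P} δ^p), then the unique lane choice equilibrium routes all decision-making vehicles on lane 1, i.e. f₂^p = 0 for all p ∈ {HV,LO; HV,HO; AV,LO}. -/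
/-- Condition 2) of Theorem 2: if the toll satisfies
`τ ≤ D₂(0) − D₁(Sδ)`, then at any lane choice (Wardrop) equilibrium all
decision-making vehicles travel on lane 1, i.e. `f₂^p = 0` for all
`p ∈ {HV,LO; HV,HO; AV,LO}`. -/
theorem all_on_lane_one_of_low_toll
    (D1 D2 : ℝ → ℝ) (hD1c : Continuous D1) (hD2c : Continuous D2)
    (hD1 : StrictMono D1) (hD2 : StrictMono D2)
    (μ τ δAVHO dL dH dA : ℝ)
    (hμ0 : 0 < μ) (hμ1 : μ < 1) (hτ : 0 < τ)
    (hδAVHO : 0 < δAVHO) (hdL : 0 < dL) (hdH : 0 < dH) (hdA : 0 < dA)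
    (Sδ : ℝ) (hSδ : Sδ = dL + dH + μ * dA + δAVHO)
    (htoll : τ ≤ D2 0 - D1 Sδ)
    (f1L f1H f1A f2L f2H f2A : ℝ)
    (h1L : 0 ≤ f1L) (h1H : 0 ≤ f1H) (h1A : 0 ≤ f1A)
    (h2L : 0 ≤ f2L) (h2H : 0 ≤ f2H) (h2A : 0 ≤ f2A)
    (hcL : f1L + f2L = dL) (hcH : f1H + f2H = dH) (hcA : f1A + f2A = dA)
    (φ1 φ2 C1 C2 : ℝ)
    (hφ1 : φ1 = f1L + f1H + μ * f1A + δAVHO)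
    (hφ2 : φ2 = f2L + f2H + μ * f2A)
    (hC1 : C1 = D1 φ1 + τ) (hC2 : C2 = D2 φ2)
    (hwL1 : f1L * (C1 - C2) ≤ 0) (hwL2 : f2L * (C2 - C1) ≤ 0)
    (hwH1 : f1H * (C1 - C2) ≤ 0) (hwH2 : f2H * (C2 - C1) ≤ 0)
    (hwA1 : f1A * (C1 - C2) ≤ 0) (hwA2 : f2A * (C2 - C1) ≤ 0) :
    f2L = 0 ∧ f2H = 0 ∧ f2A = 0 := by
  have hf1A : f1A ≤ dA := by linarith
  have hμA : μ * f1A ≤ μ * dA := mul_le_mul_of_nonneg_left hf1A hμ0.le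
  have hφ1le : φ1 ≤ Sδ := by rw [hφ1, hSδ]; linarith
  have hC1le : C1 ≤ D2 0 := by
    have := hD1.monotone hφ1le
    linarith
  have key : ∀ x : ℝ, 0 ≤ x → x ≤ φ2 → x * (C2 - C1) ≤ 0 → x = 0 := by
    intro x hx hxφ hw
    by_contra hne
    have hxpos : 0 < x := lt_of_le_of_ne hx (Ne.symm hne)
    have hφ2pos : 0 < φ2 := lt_of_lt_of_le hxpos hxφ
    have hC2gt : D2 0 < C2 := by rw [hC2]; exact hD2 hφ2pos
    have hC2le : C2 ≤ C1 := by
      by_contra h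
      push_neg at h
      nlinarith [mul_pos hxpos (sub_pos.mpr h)]
    linarith
  have hμ2A : 0 ≤ μ * f2A := mul_nonneg hμ0.le h2A
  have hwA2' : μ * f2A * (C2 - C1) ≤ 0 := by
    have h := mul_le_mul_of_nonneg_left hwA2 hμ0.le
    rw [mul_zero] at h
    linarith [mul_assoc μ f2A (C2 - C1), h]
  refine ⟨key f2L h2L (by linarith) hwL2, key f2H h2H (by linarith) hwH2, ?_⟩
  have h0 := key (μ * f2A) hμ2A (by linarith) hwA2'
  rcases mul_eq_zero.mp h0 with h | h
  · exact absurd h hμ0.ne'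
  · exact h
end

section
/- For two feasible equilibrium flows f, f⁺ ∈ S with identical effective lane-1 flow and n_HO/n_LO > 1/μ, the difference in total commuter delay equals [n_LO(1−1/μ)(f₁^{HV,LO} − f₁⁺^{HV,LO}) + (n_HO − n_LO/μ)(f₁^{HV,HO} − f₁⁺^{HV,HO})]·(D₁(φ₁*) − D₂(Σδ − φ₁*)). -/
/-- The key algebraic identity in the proof of Theorem 3: for two feasible
equilibrium flows `f, fp ∈ S` with identical effective lane-1 flow and
`n_HO/n_LO > 1/μ`, the difference in total commuter delay satisfies
`J(f) − J(fp) = [n_LO(1 − 1/μ)(f₁^{HV,LO} − fp₁^{HV,LO})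
 + (n_HO − n_LO/μ)(f₁^{HV,HO} − fp₁^{HV,HO})]·(D₁(φ₁*) − D₂(Σδ − φ₁*))`. -/
theorem commuter_delay_difference_identity
    (nLO nHO μ D1v D2v dvAVHO dL dH dA Φ : ℝ)
    (hnLO : 0 < nLO) (hn : nLO < nHO) (hμ0 : 0 < μ) (hμ1 : μ < 1)
    (hmob : nHO / nLO > 1 / μ)
    (S : Set (ℝ × ℝ × ℝ))
    (hS : S = {f | 0 ≤ f.1 ∧ f.1 ≤ dL ∧ 0 ≤ f.2.1 ∧ f.2.1 ≤ dH ∧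
        0 ≤ f.2.2 ∧ f.2.2 ≤ dA ∧ f.1 + f.2.1 + μ * f.2.2 = Φ})
    (J : ℝ × ℝ × ℝ → ℝ)
    (hJ : J = fun f => (nLO * (f.1 + f.2.2) + nHO * (f.2.1 + dvAVHO)) * D1v
        + (nLO * ((dL - f.1) + (dA - f.2.2)) + nHO * (dH - f.2.1)) * D2v)
    (f fp : ℝ × ℝ × ℝ) (hf : f ∈ S) (hfp : fp ∈ S) :
    J f - J fp =
      (nLO * (1 - 1 / μ) * (f.1 - fp.1)
        + (nHO - nLO / μ) * (f.2.1 - fp.2.1)) * (D1v - D2v) := by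
  subst hS hJ
  obtain ⟨-, -, -, -, -, -, h1⟩ := hf
  obtain ⟨-, -, -, -, -, -, h2⟩ := hfp
  have hμ : μ ≠ 0 := ne_of_gt hμ0
  have e1 : f.2.2 = (Φ - f.1 - f.2.1) / μ := by field_simp; linarith
  have e2 : fp.2.2 = (Φ - fp.1 - fp.2.1) / μ := by field_simp; linarith
  simp only [e1, e2]
  field_simp
  ring
end

section
/- Under differentiated tolls with ν^{HV,HO} ≤ ν^{AV,LO} and φ₁* ≤ δ^{AV,LO} + δ^{AV,HO}, assigning toll vector (τ₊, τ₊, τ*) with τ₊ > τ* to (HV,LO; HV,HO; AV,LO) makes the flow split f₁ = (0, 0, (φ₁* − δ^{AV,HO})/μ) the unique lane choice equilibrium, which achieves the best-case total commuter delay J*(τ*) attainable under the uniform toll τ*. -/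
/-!
Against the uniform toll `τ*` the lanes are in balance at `φ₁*`, so lane 2 costs exactly
`D₁(φ₁*) + τ*`, and the total delay of a split on `S` is a constant minus `τ*` times the
number of commuters it keeps on lane 1. Per unit of effective flow a class carries `n_LO`,
`n_HO` or `n_LO / μ` commuters, and `n_LO / μ` is the largest of these, so the best case
sends only AV,LO vehicles to lane 1.

Under the tolls `(τ₊, τ₊, τ*)` the gap `D₁(φ₁) + τ* − D₂(Σδ − φ₁)` is strictly increasing
in `φ₁` and vanishes at `φ₁*`. A positive gap empties lane 1 of all tolled classes and a
negative one fills it with all AV,LO vehicles; the case conditions `δ^{AV,HO} ≤ φ₁*` and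
`φ₁* ≤ δ^{AV,LO} + δ^{AV,HO}` rule both out, and at zero gap the surcharge `τ₊ − τ*` keeps
the human-driven classes off lane 1.
-/

theorem strictMono_add_sub_comp_sub {D1 D2 : ℝ → ℝ} (hD1 : StrictMono D1)
    (hD2 : StrictMono D2) (τ s : ℝ) : StrictMono fun φ => D1 φ + τ - D2 (s - φ) := by
  intro a b hab
  have h1 := hD1 hab
  have h2 := hD2 (sub_lt_sub_left hab s)
  simp only
  linarith

theorem mul_add_mul_add_mul_le_mul_add_add {a b m x y z : ℝ} (ha : a ≤ m) (hb : b ≤ m)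
    (hx : 0 ≤ x) (hy : 0 ≤ y) : a * x + b * y + m * z ≤ m * (x + y + z) := by
  linarith [mul_le_mul_of_nonneg_right ha hx, mul_le_mul_of_nonneg_right hb hy]

theorem weighted_lane_count_le {nLO nHO μ f1 f2 f3 t : ℝ} (hnLO : 0 ≤ nLO) (hμ0 : 0 < μ)
    (hμ1 : μ ≤ 1) (hmob : nHO ≤ nLO / μ) (h1 : 0 ≤ f1) (h2 : 0 ≤ f2)
    (hsum : f1 + f2 + μ * f3 = μ * t) :
    nLO * f1 + nHO * f2 + nLO * f3 ≤ nLO * t := by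
  have hLO : nLO ≤ nLO / μ := le_div_self hnLO hμ0 hμ1
  have hbound := mul_add_mul_add_mul_le_mul_add_add (z := μ * f3) hLO hmob h1 h2
  have cancel : ∀ x, nLO / μ * (μ * x) = nLO * x := fun x => by field_simp
  rwa [hsum, cancel, cancel] at hbound

theorem lane_flows_of_equilibrium {g : ℝ → ℝ} (hg : StrictMono g)
    {φstar ε μ δ dA f1 f2 f3 φ : ℝ} (hgstar : g φstar = 0) (hε : 0 < ε)
    (hlo : δ ≤ φstar) (hhi : φstar ≤ μ * dA + δ)
    (h1 : 0 ≤ f1) (h2 : 0 ≤ f2) (h3 : 0 ≤ f3) (h3d : f3 ≤ dA)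
    (hφ : φ = f1 + f2 + μ * f3 + δ)
    (c1 : f1 * (g φ + ε) ≤ 0) (c2 : f2 * (g φ + ε) ≤ 0)
    (c3 : f3 * g φ ≤ 0) (c3d : (dA - f3) * (-g φ) ≤ 0) :
    f1 = 0 ∧ f2 = 0 ∧ μ * f3 + δ = φstar := by
  have hφstar : φ = φstar := by
    rcases lt_trichotomy φ φstar with hlt | heq | hgt
    · have hneg : g φ < 0 := hgstar ▸ hg hlt
      have hfull : dA - f3 ≤ 0 := nonpos_of_mul_nonpos_left c3d (neg_pos.2 hneg)
      have : f3 = dA := by linarith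
      subst this
      linarith
    · exact heq
    · have hpos : 0 < g φ := hgstar ▸ hg hgt
      have := nonpos_of_mul_nonpos_left c1 (by linarith)
      have := nonpos_of_mul_nonpos_left c2 (by linarith)
      have hf3 : f3 = 0 := le_antisymm (nonpos_of_mul_nonpos_left c3 hpos) h3
      subst hf3
      linarith
  have hgφ : g φ = 0 := hφstar ▸ hgstar
  rw [hgφ, zero_add] at c1 c2
  have hf1 : f1 = 0 := le_antisymm (nonpos_of_mul_nonpos_left c1 hε) h1
  have hf2 : f2 = 0 := le_antisymm (nonpos_of_mul_nonpos_left c2 hε) h2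
  refine ⟨hf1, hf2, ?_⟩
  subst hf1 hf2
  linarith
theorem toll_differentiation_case_1a_general
    (D1 D2 : ℝ → ℝ)
    (hD1 : StrictMono D1) (hD2 : StrictMono D2)
    (nLO nHO μ τstar τplus δAVHO dvAVHO dL dH dA φ1star : ℝ)
    (hnLO : 0 < nLO) (hμ0 : 0 < μ) (hμ1 : μ < 1)
    (hmob : nHO ≤ nLO / μ)
    (hτstar : 0 < τstar) (hτplus : τplus > τstar)
    (hdL : 0 < dL) (hdH : 0 < dH)
    (Sδ : ℝ)
    -- interior equilibrium flow under the uniform toll τ*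
    (heq : D1 φ1star + τstar = D2 (Sδ - φ1star))
    (hφlo : δAVHO ≤ φ1star)
    -- case condition φ₁* ≤ δ^{AV,LO} + δ^{AV,HO}, with δ^{AV,LO} = μ d_A
    (hcase : φ1star ≤ μ * dA + δAVHO)
    -- the uniform-toll equilibrium simplex and the total commuter delay
    (S : Set (ℝ × ℝ × ℝ))
    (hS : S = {f | 0 ≤ f.1 ∧ f.1 ≤ dL ∧ 0 ≤ f.2.1 ∧ f.2.1 ≤ dH ∧
        0 ≤ f.2.2 ∧ f.2.2 ≤ dA ∧ f.1 + f.2.1 + μ * f.2.2 = φ1star - δAVHO})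
    (J : ℝ × ℝ × ℝ → ℝ)
    (hJ : J = fun f => (nLO * (f.1 + f.2.2) + nHO * (f.2.1 + dvAVHO)) * D1 φ1star
        + (nLO * ((dL - f.1) + (dA - f.2.2)) + nHO * (dH - f.2.1))
          * D2 (Sδ - φ1star))
    -- the target flow split
    (target : ℝ × ℝ × ℝ) (htarget : target = (0, 0, (φ1star - δAVHO) / μ)) :
    -- it is the best-case equilibrium under the uniform toll:
    (target ∈ S ∧ ∀ f ∈ S, J target ≤ J f) ∧
    -- and it is the unique equilibrium under the heterogeneous tolls (τ₊,τ₊,τ*):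
    (∀ f : ℝ × ℝ × ℝ,
      (0 ≤ f.1 ∧ f.1 ≤ dL ∧ 0 ≤ f.2.1 ∧ f.2.1 ≤ dH ∧ 0 ≤ f.2.2 ∧ f.2.2 ≤ dA) →
      (∀ φ1 φ2 : ℝ, φ1 = f.1 + f.2.1 + μ * f.2.2 + δAVHO → φ2 = Sδ - φ1 →
        f.1 * (D1 φ1 + τplus - D2 φ2) ≤ 0 ∧
        (dL - f.1) * (D2 φ2 - D1 φ1 - τplus) ≤ 0 ∧
        f.2.1 * (D1 φ1 + τplus - D2 φ2) ≤ 0 ∧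
        (dH - f.2.1) * (D2 φ2 - D1 φ1 - τplus) ≤ 0 ∧
        f.2.2 * (D1 φ1 + τstar - D2 φ2) ≤ 0 ∧
        (dA - f.2.2) * (D2 φ2 - D1 φ1 - τstar) ≤ 0) →
      f = target) := by
  subst hS hJ htarget
  have hsplit : μ * ((φ1star - δAVHO) / μ) = φ1star - δAVHO := mul_div_cancel₀ _ hμ0.ne'
  refine ⟨⟨⟨le_rfl, hdL.le, le_rfl, hdH.le, div_nonneg (by linarith) hμ0.le,
    (div_le_iff₀' hμ0).2 (by linarith), by simpa using hsplit⟩, ?_⟩, ?_⟩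
  · rintro ⟨f1, f2, f3⟩ ⟨h1, -, h2, -, -, -, hsum⟩
    have hcount := weighted_lane_count_le hnLO.le hμ0 hμ1.le hmob h1 h2 (hsum.trans hsplit.symm)
    simp only [← heq]
    linear_combination mul_le_mul_of_nonneg_right hcount hτstar.le
  · rintro ⟨f1, f2, f3⟩ ⟨h1, -, h2, -, h3, h3d⟩ hcond
    obtain ⟨c1, -, c2, -, c3, c3d⟩ := hcond _ _ rfl rfl
    obtain ⟨rfl, rfl, hφ⟩ := lane_flows_of_equilibrium
      (strictMono_add_sub_comp_sub hD1 hD2 τstar Sδ) (by linarith) (sub_pos.2 hτplus)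
      hφlo hcase h1 h2 h3 h3d rfl (by linear_combination c1) (by linear_combination c2) c3
      (by linear_combination c3d)
    simp only [Prod.mk.injEq, true_and]
    rw [eq_div_iff hμ0.ne']
    linarith

/-- Proposition 2, case 1a): toll differentiation. Suppose
`ν^{HV,HO} ≤ ν^{AV,LO}` (i.e. `n_HO ≤ n_LO/μ`) and the optimal uniform toll
`τ* > 0` induces an interior equilibrium flow `φ₁*` with
`φ₁* ≤ δ^{AV,LO} + δ^{AV,HO}`.  Then under the heterogeneous toll vector
`(τ₊, τ₊, τ*)` with `τ₊ > τ*` the flow split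
`f₁ = (0, 0, (φ₁* − δ^{AV,HO})/μ)` is the unique lane choice equilibrium, and
it achieves the best-case total commuter delay attainable on the uniform-toll
equilibrium simplex `S`. -/
theorem toll_differentiation_case_1a
    (D1 D2 : ℝ → ℝ) (hD1c : Continuous D1) (hD2c : Continuous D2)
    (hD1 : StrictMono D1) (hD2 : StrictMono D2)
    (nLO nHO μ τstar τplus δAVHO dvAVHO dL dH dA φ1star : ℝ)
    (hnLO : 0 < nLO) (hn : nLO < nHO) (hμ0 : 0 < μ) (hμ1 : μ < 1)
    (hmob : nHO ≤ nLO / μ)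
    (hτstar : 0 < τstar) (hτplus : τplus > τstar)
    (hδAVHO : 0 < δAVHO) (hdL : 0 < dL) (hdH : 0 < dH) (hdA : 0 < dA)
    (Sδ : ℝ) (hSδ : Sδ = dL + dH + μ * dA + δAVHO)
    -- interior equilibrium flow under the uniform toll τ*
    (heq : D1 φ1star + τstar = D2 (Sδ - φ1star))
    (hφlo : δAVHO ≤ φ1star)
    -- case condition φ₁* ≤ δ^{AV,LO} + δ^{AV,HO}, with δ^{AV,LO} = μ d_A
    (hcase : φ1star ≤ μ * dA + δAVHO)
    -- the uniform-toll equilibrium simplex and the total commuter delay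
    (S : Set (ℝ × ℝ × ℝ))
    (hS : S = {f | 0 ≤ f.1 ∧ f.1 ≤ dL ∧ 0 ≤ f.2.1 ∧ f.2.1 ≤ dH ∧
        0 ≤ f.2.2 ∧ f.2.2 ≤ dA ∧ f.1 + f.2.1 + μ * f.2.2 = φ1star - δAVHO})
    (J : ℝ × ℝ × ℝ → ℝ)
    (hJ : J = fun f => (nLO * (f.1 + f.2.2) + nHO * (f.2.1 + dvAVHO)) * D1 φ1star
        + (nLO * ((dL - f.1) + (dA - f.2.2)) + nHO * (dH - f.2.1))
          * D2 (Sδ - φ1star))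
    -- the target flow split
    (target : ℝ × ℝ × ℝ) (htarget : target = (0, 0, (φ1star - δAVHO) / μ)) :
    -- it is the best-case equilibrium under the uniform toll:
    (target ∈ S ∧ ∀ f ∈ S, J target ≤ J f) ∧
    -- and it is the unique equilibrium under the heterogeneous tolls (τ₊,τ₊,τ*):
    (∀ f : ℝ × ℝ × ℝ,
      (0 ≤ f.1 ∧ f.1 ≤ dL ∧ 0 ≤ f.2.1 ∧ f.2.1 ≤ dH ∧ 0 ≤ f.2.2 ∧ f.2.2 ≤ dA) →
      (∀ φ1 φ2 : ℝ, φ1 = f.1 + f.2.1 + μ * f.2.2 + δAVHO → φ2 = Sδ - φ1 →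
        f.1 * (D1 φ1 + τplus - D2 φ2) ≤ 0 ∧
        (dL - f.1) * (D2 φ2 - D1 φ1 - τplus) ≤ 0 ∧
        f.2.1 * (D1 φ1 + τplus - D2 φ2) ≤ 0 ∧
        (dH - f.2.1) * (D2 φ2 - D1 φ1 - τplus) ≤ 0 ∧
        f.2.2 * (D1 φ1 + τstar - D2 φ2) ≤ 0 ∧
        (dA - f.2.2) * (D2 φ2 - D1 φ1 - τstar) ≤ 0) →
      f = target) :=
  toll_differentiation_case_1a_general D1 D2 hD1 hD2 nLO nHO μ τstar τplus δAVHO dvAVHO dL dH dA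
    φ1star hnLO hμ0 hμ1 hmob hτstar hτplus hdL hdH Sδ heq hφlo hcase S hS J hJ target htarget
end

section
/- Under the hypotheses of the lane-delay resilience theorem (class g splits across both lanes at the no-misbehavior equilibrium and misbehavior proportions satisfy the resilience bound), if no class with toll strictly greater than τ^g misbehaves (Q₊^g ∩ M = ∅), then the total commuter delay with misbehavior equals the total commuter delay without misbehavior: J(f̂) = J(f). -/
open Finset in
/-- Theorem 5 a): under the resilience hypotheses of Theorem 4, if no class
with toll strictly greater than `τ^g` misbehaves (`Q₊^g ∩ M = ∅`), then the
total commuter delay with misbehavior equals the one without misbehavior,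
`J(f̂) = J(f)`.  Classes are indexed by `Fin 3`, with commuter demands `d p`,
effective demands `δ p` (so mobility degree `ν p = d p / δ p`), tolls `τ p`,
misbehaving proportions `α p`, honest equilibrium lane-1 effective flows `e p`
(with misbehavior) and `e0 p` (without misbehavior). -/
theorem total_delay_unchanged_of_no_high_toll_misbehavior
    (D1 D2 : ℝ → ℝ) (hD1c : Continuous D1) (hD2c : Continuous D2)
    (hD1 : StrictMono D1) (hD2 : StrictMono D2)
    (τ δ d α : Fin 3 → ℝ) (δAVHO dAVHO : ℝ)
    (hδAVHO : 0 ≤ δAVHO) (hdAVHO : 0 ≤ dAVHO)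
    (hτpos : ∀ p, 0 < τ p) (hτinj : Function.Injective τ)
    (hδpos : ∀ p, 0 < δ p) (hdpos : ∀ p, 0 < d p)
    (hα : ∀ p, 0 ≤ α p ∧ α p ≤ 1)
    (Sδ : ℝ) (hSδ : Sδ = δAVHO + ∑ p, δ p)
    -- mobility degrees
    (ν : Fin 3 → ℝ) (hν : ∀ p, ν p = d p / δ p)
    -- condition 1): class g splits across both lanes without misbehavior
    (g : Fin 3) (φ1star : ℝ)
    (heq : D1 φ1star + τ g = D2 (Sδ - φ1star))
    (hφlo : δAVHO ≤ φ1star) (hφhi : φ1star ≤ Sδ)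
    (Qm : Finset (Fin 3)) (hQm : Qm = {p | 0 < τ p ∧ τ p < τ g})
    -- condition 2): bound on misbehaving proportions
    (hbound : ∑ p ∈ Finset.univ \ Qm, δ p * α p ≤
        φ1star - δAVHO - ∑ q ∈ Qm, δ q)
    -- hypothesis Q₊^g ∩ M = ∅
    (hQpM : ∀ p, τ g < τ p → α p = 0)
    -- honest lane choice equilibrium with misbehavior
    (e : Fin 3 → ℝ) (he : ∀ p, 0 ≤ e p ∧ e p ≤ δ p * (1 - α p))
    (φ1hat : ℝ)
    (hφ1hat : φ1hat = δAVHO + (∑ p, δ p * α p) + ∑ p, e p)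
    (hw1 : ∀ p, e p * (D1 φ1hat + τ p - D2 (Sδ - φ1hat)) ≤ 0)
    (hw2 : ∀ p, (δ p * (1 - α p) - e p) *
        (D2 (Sδ - φ1hat) - D1 φ1hat - τ p) ≤ 0)
    -- lane choice equilibrium without misbehavior
    (e0 : Fin 3 → ℝ) (he0 : ∀ p, 0 ≤ e0 p ∧ e0 p ≤ δ p)
    (φ10 : ℝ) (hφ10 : φ10 = δAVHO + ∑ p, e0 p)
    (hw01 : ∀ p, e0 p * (D1 φ10 + τ p - D2 (Sδ - φ10)) ≤ 0)
    (hw02 : ∀ p, (δ p - e0 p) * (D2 (Sδ - φ10) - D1 φ10 - τ p) ≤ 0)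
    -- total commuter delays
    (Jhat J0 : ℝ)
    (hJhat : Jhat = (dAVHO + ∑ p, ν p * (e p + δ p * α p)) * D1 φ1hat
        + (∑ p, ν p * (δ p * (1 - α p) - e p)) * D2 (Sδ - φ1hat))
    (hJ0 : J0 = (dAVHO + ∑ p, ν p * e0 p) * D1 φ10
        + (∑ p, ν p * (δ p - e0 p)) * D2 (Sδ - φ10)) :
    Jhat = J0 := by

  -- strict antitonicity of the delay gap  A x = D2 (Sδ - x) - D1 x
  have hA : ∀ x y : ℝ, x < y → D2 (Sδ - y) - D1 y < D2 (Sδ - x) - D1 x := by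
    intro x y h
    have h1 := hD1 h
    have h2 := hD2 (show Sδ - y < Sδ - x by linarith)
    linarith
  have hA' : ∀ x y : ℝ, x ≤ y → D2 (Sδ - y) - D1 y ≤ D2 (Sδ - x) - D1 x := by
    intro x y h
    have h1 := hD1.monotone h
    have h2 := hD2.monotone (show Sδ - y ≤ Sδ - x by linarith)
    linarith
  have key : ∀ a b : ℝ, a * b ≤ 0 → 0 ≤ a → 0 < b → a = 0 := by
    intro a b h ha hb
    have h0 : a * b = 0 := le_antisymm h (mul_nonneg ha hb.le)
    rcases mul_eq_zero.mp h0 with h | h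
    · exact h
    · exact absurd h hb.ne'
  have hmemQm : ∀ p, p ∈ Qm ↔ τ p < τ g := by
    intro p
    rw [← Finset.mem_coe, hQm]
    simp [hτpos p]
  have hδα0 : ∀ p, 0 ≤ δ p * α p := fun p => mul_nonneg (hδpos p).le (hα p).1
  have hQbound : δAVHO + ∑ q ∈ Qm, δ q ≤ φ1star := by
    have h0 : (0:ℝ) ≤ ∑ p ∈ Finset.univ \ Qm, δ p * α p :=
      Finset.sum_nonneg fun p _ => hδα0 p
    linarith
  -- Step 1 : φ10 ≤ φ1star
  have step1 : φ10 ≤ φ1star := by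
    by_contra hc
    push_neg at hc
    have hAlt : D2 (Sδ - φ10) - D1 φ10 < τ g := by
      have := hA φ1star φ10 hc; linarith
    have he0z : ∀ p, ¬ (τ p < τ g) → e0 p = 0 := by
      intro p hp
      push_neg at hp
      exact key _ _ (hw01 p) (he0 p).1 (by linarith)
    have hsum : ∑ p, e0 p ≤ ∑ q ∈ Qm, δ q := by
      rw [← Finset.sum_sdiff (Finset.subset_univ Qm)]
      have h1 : ∑ p ∈ Finset.univ \ Qm, e0 p = 0 :=
        Finset.sum_eq_zero fun p hp => he0z p (by
          simp only [Finset.mem_sdiff, Finset.mem_univ, true_and, hmemQm] at hp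
          exact hp)
      have h2 : ∑ p ∈ Qm, e0 p ≤ ∑ q ∈ Qm, δ q :=
        Finset.sum_le_sum fun p _ => (he0 p).2
      linarith
    linarith [hQbound]
  -- Step 2 : φ1hat ≤ φ1star
  have step2 : φ1hat ≤ φ1star := by
    by_contra hc
    push_neg at hc
    have hAlt : D2 (Sδ - φ1hat) - D1 φ1hat < τ g := by
      have := hA φ1star φ1hat hc; linarith
    have hez : ∀ p, ¬ (τ p < τ g) → e p = 0 := by
      intro p hp
      push_neg at hp
      exact key _ _ (hw1 p) (he p).1 (by linarith)
    have hsum : ∑ p, (δ p * α p + e p) ≤ φ1star - δAVHO := by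
      rw [← Finset.sum_sdiff (Finset.subset_univ Qm)]
      have h1 : ∑ p ∈ Finset.univ \ Qm, (δ p * α p + e p)
          = ∑ p ∈ Finset.univ \ Qm, δ p * α p := by
        refine Finset.sum_congr rfl fun p hp => ?_
        have h0 : e p = 0 := hez p (by
          simp only [Finset.mem_sdiff, Finset.mem_univ, true_and, hmemQm] at hp
          exact hp)
        rw [h0, add_zero]
      have h2 : ∑ p ∈ Qm, (δ p * α p + e p) ≤ ∑ p ∈ Qm, δ p := by
        refine Finset.sum_le_sum fun p _ => ?_
        have h3 := (he p).2
        have hr : δ p * α p + δ p * (1 - α p) = δ p := by ring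
        linarith
      linarith [hbound]
    have hsplit : ∑ p, (δ p * α p + e p) = (∑ p, δ p * α p) + ∑ p, e p :=
      Finset.sum_add_distrib
    linarith [hφ1hat]
  -- Step 3 : φ10 ≤ φ1hat
  have step3 : φ10 ≤ φ1hat := by
    by_contra hc
    push_neg at hc
    have hAA := hA φ1hat φ10 hc
    have hle : ∀ p, e0 p ≤ e p + δ p * α p := by
      intro p
      rcases lt_or_ge (τ p) (D2 (Sδ - φ1hat) - D1 φ1hat) with h | h
      · have h1 : δ p * (1 - α p) - e p = 0 :=
          key _ _ (hw2 p) (by linarith [(he p).2]) (by linarith)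
        have hr : δ p * (1 - α p) + δ p * α p = δ p := by ring
        linarith [(he0 p).2]
      · have h0 : e0 p = 0 := key _ _ (hw01 p) (he0 p).1 (by linarith)
        rw [h0]
        exact add_nonneg (he p).1 (hδα0 p)
    have hs : ∑ p, e0 p ≤ ∑ p, (e p + δ p * α p) :=
      Finset.sum_le_sum fun p _ => hle p
    have hsplit : ∑ p, (e p + δ p * α p) = (∑ p, e p) + ∑ p, δ p * α p :=
      Finset.sum_add_distrib
    linarith [hφ10, hφ1hat]
  -- Step 4 : φ1hat ≤ φ10
  have step4 : φ1hat ≤ φ10 := by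
    by_contra hc
    push_neg at hc
    have hAA := hA φ10 φ1hat hc
    have hg10 : τ g < D2 (Sδ - φ10) - D1 φ10 := by
      have := hA φ10 φ1star (lt_of_lt_of_le hc step2)
      linarith
    have hle : ∀ p, e p + δ p * α p ≤ e0 p := by
      intro p
      rcases lt_or_ge (τ p) (D2 (Sδ - φ10) - D1 φ10) with h | h
      · have h0 : δ p - e0 p = 0 :=
          key _ _ (hw02 p) (by linarith [(he0 p).2]) (by linarith)
        have hr : δ p * (1 - α p) + δ p * α p = δ p := by ring
        linarith [(he p).2]
      · have hτ : τ g < τ p := lt_of_lt_of_le hg10 h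
        have hα0 : α p = 0 := hQpM p hτ
        have h0 : e p = 0 := key _ _ (hw1 p) (he p).1 (by linarith)
        rw [h0, hα0]
        simpa using (he0 p).1
    have hs : ∑ p, (e p + δ p * α p) ≤ ∑ p, e0 p :=
      Finset.sum_le_sum fun p _ => hle p
    have hsplit : ∑ p, (e p + δ p * α p) = (∑ p, e p) + ∑ p, δ p * α p :=
      Finset.sum_add_distrib
    linarith [hφ10, hφ1hat]
  have φeq : φ1hat = φ10 := le_antisymm step4 step3
  subst φeq
  -- the common flow is at most φ1star, so the delay gap is at least τ g
  have hAφ : τ g ≤ D2 (Sδ - φ1hat) - D1 φ1hat := by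
    have := hA' φ1hat φ1star step1
    linarith
  -- away from the indifference toll, lane occupancies agree class by class
  have step5 : ∀ p, τ p ≠ D2 (Sδ - φ1hat) - D1 φ1hat → e p + δ p * α p = e0 p := by
    intro p hp
    rcases lt_or_gt_of_ne hp with h | h
    · have h1 : δ p * (1 - α p) - e p = 0 :=
        key _ _ (hw2 p) (by linarith [(he p).2]) (by linarith)
      have h2 : δ p - e0 p = 0 :=
        key _ _ (hw02 p) (by linarith [(he0 p).2]) (by linarith)
      have hr : δ p * (1 - α p) + δ p * α p = δ p := by ring
      linarith
    · have h1 : e p = 0 := key _ _ (hw1 p) (he p).1 (by linarith)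
      have h2 : e0 p = 0 := key _ _ (hw01 p) (he0 p).1 (by linarith)
      have hα0 : α p = 0 := hQpM p (by linarith)
      rw [h1, h2, hα0]
      ring
  -- sums of occupancies agree since the total flows agree
  have hsumeq : ∑ p, (e p + δ p * α p) = ∑ p, e0 p := by
    have hsplit : ∑ p, (e p + δ p * α p) = (∑ p, e p) + ∑ p, δ p * α p :=
      Finset.sum_add_distrib
    linarith [hφ1hat, hφ1hat]
  -- hence occupancies agree class by class (at most one indifferent class)
  have hall : ∀ p, e p + δ p * α p = e0 p := by
    intro q
    by_cases hq : τ q = D2 (Sδ - φ1hat) - D1 φ1hat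
    · have herase : ∀ p ∈ Finset.univ.erase q, e p + δ p * α p = e0 p := by
        intro p hp
        refine step5 p fun hcontra => ?_
        exact (Finset.mem_erase.mp hp).1 (hτinj (hcontra.trans hq.symm))
      have h1 : ∑ p ∈ Finset.univ.erase q, (e p + δ p * α p)
          = ∑ p ∈ Finset.univ.erase q, e0 p := Finset.sum_congr rfl herase
      have h2 := Finset.add_sum_erase Finset.univ
        (fun p => e p + δ p * α p) (Finset.mem_univ q)
      have h3 := Finset.add_sum_erase Finset.univ e0 (Finset.mem_univ q)
      linarith [hsumeq]
    · exact step5 q hq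
  -- conclude
  rw [hJhat, hJ0]
  have hs1 : ∑ p, ν p * (e p + δ p * α p) = ∑ p, ν p * e0 p :=
    Finset.sum_congr rfl fun p _ => by rw [hall p]
  have hs2 : ∑ p, ν p * (δ p * (1 - α p) - e p) = ∑ p, ν p * (δ p - e0 p) :=
    Finset.sum_congr rfl fun p _ => by rw [← hall p]; ring
  rw [hs1, hs2]
end

section
/- A Wardrop lane choice equilibrium always exists: for continuous increasing delay functions and any toll τ > 0, there exists a feasible flow split f satisfying f₁^p(C₁(f) − C₂(f)) ≤ 0 and f₂^p(C₂(f) − C₁(f)) ≤ 0 for every decision-making class p. -/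
/-- Proposition 1 (existence): for continuous increasing delay functions and
any toll `τ > 0`, a Wardrop lane choice equilibrium always exists, i.e. there
is a feasible flow split satisfying `f₁^p (C₁ − C₂) ≤ 0` and
`f₂^p (C₂ − C₁) ≤ 0` for every decision-making class `p`. -/
theorem lane_choice_equilibrium_exists
    (D1 D2 : ℝ → ℝ) (hD1c : Continuous D1) (hD2c : Continuous D2)
    (hD1 : Monotone D1) (hD2 : Monotone D2)
    (μ τ δAVHO dL dH dA : ℝ)
    (hμ0 : 0 < μ) (hμ1 : μ < 1) (hτ : 0 < τ)
    (hδAVHO : 0 ≤ δAVHO) (hdL : 0 ≤ dL) (hdH : 0 ≤ dH) (hdA : 0 ≤ dA)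
    (Sδ : ℝ) (hSδ : Sδ = dL + dH + μ * dA + δAVHO) :
    ∃ f1L f1H f1A f2L f2H f2A : ℝ,
      0 ≤ f1L ∧ 0 ≤ f1H ∧ 0 ≤ f1A ∧ 0 ≤ f2L ∧ 0 ≤ f2H ∧ 0 ≤ f2A ∧
      f1L + f2L = dL ∧ f1H + f2H = dH ∧ f1A + f2A = dA ∧
      (∀ φ1 φ2 C1 C2 : ℝ,
        φ1 = f1L + f1H + μ * f1A + δAVHO → φ2 = f2L + f2H + μ * f2A →
        C1 = D1 φ1 + τ → C2 = D2 φ2 →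
        f1L * (C1 - C2) ≤ 0 ∧ f2L * (C2 - C1) ≤ 0 ∧
        f1H * (C1 - C2) ≤ 0 ∧ f2H * (C2 - C1) ≤ 0 ∧
        f1A * (C1 - C2) ≤ 0 ∧ f2A * (C2 - C1) ≤ 0) := by
  set S : ℝ := dL + dH + μ * dA with hS
  set g : ℝ → ℝ := fun t => (D1 (t * S + δAVHO) + τ) - D2 ((1 - t) * S) with hg
  have hgc : Continuous g := by
    apply Continuous.sub
    · exact ((hD1c.comp (by continuity)).add continuous_const)
    · exact hD2c.comp (by continuity)
  -- find t ∈ [0,1] with the right sign conditions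
  have key : ∃ t : ℝ, 0 ≤ t ∧ t ≤ 1 ∧ t * g t ≤ 0 ∧ (1 - t) * (-(g t)) ≤ 0 := by
    by_cases h0 : 0 ≤ g 0
    · exact ⟨0, le_refl 0, zero_le_one, by simp, by simpa using h0⟩
    · push_neg at h0
      by_cases h1 : g 1 ≤ 0
      · exact ⟨1, zero_le_one, le_refl 1, by simpa using h1, by simp⟩
      · push_neg at h1
        have : (0 : ℝ) ∈ Set.Icc (g 0) (g 1) := ⟨h0.le, h1.le⟩
        have := intermediate_value_Icc (by norm_num : (0:ℝ) ≤ 1) hgc.continuousOn this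
        obtain ⟨t, ht, hgt⟩ := this
        exact ⟨t, ht.1, ht.2, by rw [hgt]; simp, by rw [hgt]; simp⟩
  obtain ⟨t, ht0, ht1, hA, hB⟩ := key
  have ht1' : 0 ≤ 1 - t := by linarith
  refine ⟨t * dL, t * dH, t * dA, (1 - t) * dL, (1 - t) * dH, (1 - t) * dA,
    mul_nonneg ht0 hdL, mul_nonneg ht0 hdH, mul_nonneg ht0 hdA,
    mul_nonneg ht1' hdL, mul_nonneg ht1' hdH, mul_nonneg ht1' hdA,
    by ring, by ring, by ring, ?_⟩
  intro φ1 φ2 C1 C2 hφ1 hφ2 hC1 hC2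
  have hφ1' : φ1 = t * S + δAVHO := by rw [hφ1, hS]; ring
  have hφ2' : φ2 = (1 - t) * S := by rw [hφ2, hS]; ring
  have hgt : C1 - C2 = g t := by rw [hC1, hC2, hφ1', hφ2', hg]
  have h1 : t * (C1 - C2) ≤ 0 := by rw [hgt]; exact hA
  have h2 : (1 - t) * (C2 - C1) ≤ 0 := by
    have : C2 - C1 = -(g t) := by rw [← hgt]; ring
    rw [this]; exact hB
  refine ⟨?_, ?_, ?_, ?_, ?_, ?_⟩
  · calc t * dL * (C1 - C2) = dL * (t * (C1 - C2)) := by ring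
      _ ≤ 0 := mul_nonpos_of_nonneg_of_nonpos hdL h1
  · calc (1 - t) * dL * (C2 - C1) = dL * ((1 - t) * (C2 - C1)) := by ring
      _ ≤ 0 := mul_nonpos_of_nonneg_of_nonpos hdL h2
  · calc t * dH * (C1 - C2) = dH * (t * (C1 - C2)) := by ring
      _ ≤ 0 := mul_nonpos_of_nonneg_of_nonpos hdH h1
  · calc (1 - t) * dH * (C2 - C1) = dH * ((1 - t) * (C2 - C1)) := by ring
      _ ≤ 0 := mul_nonpos_of_nonneg_of_nonpos hdH h2
  · calc t * dA * (C1 - C2) = dA * (t * (C1 - C2)) := by ring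
      _ ≤ 0 := mul_nonpos_of_nonneg_of_nonpos hdA h1
  · calc (1 - t) * dA * (C2 - C1) = dA * ((1 - t) * (C2 - C1)) := by ring
      _ ≤ 0 := mul_nonpos_of_nonneg_of_nonpos hdA h2
end

section
/- If the uniform toll τ > 0 induces an interior equilibrium with effective lane-1 flow φ₁*, then among all equilibria in the simplex S the worst-case equilibrium in terms of total commuter delay always assigns the maximal feasible HV,LO flow to lane 1, regardless of the ordering between ν^{HV,HO} and ν^{AV,LO}. -/
set_option maxHeartbeats 1000000


/-- In all cases of Theorem 3 (regardless of the ordering between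
`ν^{HV,HO} = n_HO` and `ν^{AV,LO} = n_LO/μ`), the worst-case equilibrium in
terms of total commuter delay assigns the maximal feasible HV,LO flow to
lane 1: there is a point `fp` of the equilibrium simplex `S` with maximal
`f₁^{HV,LO}` such that `J f ≤ J fp` for all `f ∈ S`. -/
theorem worst_case_assigns_max_HVLO
    (nLO nHO μ D1v D2v τ dvAVHO dL dH dA Φ : ℝ)
    (hnLO : 0 < nLO) (hn : nLO < nHO) (hμ0 : 0 < μ) (hμ1 : μ < 1)
    (hτ : 0 < τ) (hD : D1v + τ = D2v)
    (hdvAVHO : 0 ≤ dvAVHO)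
    (S : Set (ℝ × ℝ × ℝ))
    (hS : S = {f | 0 ≤ f.1 ∧ f.1 ≤ dL ∧ 0 ≤ f.2.1 ∧ f.2.1 ≤ dH ∧
        0 ≤ f.2.2 ∧ f.2.2 ≤ dA ∧ f.1 + f.2.1 + μ * f.2.2 = Φ})
    (hne : S.Nonempty)
    (J : ℝ × ℝ × ℝ → ℝ)
    (hJ : J = fun f => (nLO * (f.1 + f.2.2) + nHO * (f.2.1 + dvAVHO)) * D1v
        + (nLO * ((dL - f.1) + (dA - f.2.2)) + nHO * (dH - f.2.1)) * D2v) :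
    ∃ fp ∈ S, (∀ f ∈ S, f.1 ≤ fp.1) ∧ (∀ f ∈ S, J f ≤ J fp) := by
  subst hS hJ hD
  have hclosed : IsClosed {f : ℝ × ℝ × ℝ | 0 ≤ f.1 ∧ f.1 ≤ dL ∧ 0 ≤ f.2.1 ∧ f.2.1 ≤ dH ∧
      0 ≤ f.2.2 ∧ f.2.2 ≤ dA ∧ f.1 + f.2.1 + μ * f.2.2 = Φ} := by
    apply IsClosed.inter (isClosed_le continuous_const continuous_fst)
    apply IsClosed.inter (isClosed_le continuous_fst continuous_const)
    apply IsClosed.inter (isClosed_le continuous_const (continuous_fst.comp continuous_snd))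
    apply IsClosed.inter (isClosed_le (continuous_fst.comp continuous_snd) continuous_const)
    apply IsClosed.inter (isClosed_le continuous_const (continuous_snd.comp continuous_snd))
    apply IsClosed.inter (isClosed_le (continuous_snd.comp continuous_snd) continuous_const)
    exact isClosed_eq (by fun_prop) continuous_const
  have hsub : {f : ℝ × ℝ × ℝ | 0 ≤ f.1 ∧ f.1 ≤ dL ∧ 0 ≤ f.2.1 ∧ f.2.1 ≤ dH ∧
      0 ≤ f.2.2 ∧ f.2.2 ≤ dA ∧ f.1 + f.2.1 + μ * f.2.2 = Φ} ⊆
      Set.Icc 0 dL ×ˢ (Set.Icc 0 dH ×ˢ Set.Icc 0 dA) := by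
    rintro f ⟨h1, h2, h3, h4, h5, h6, -⟩
    exact ⟨⟨h1, h2⟩, ⟨h3, h4⟩, ⟨h5, h6⟩⟩
  have hcpt : IsCompact {f : ℝ × ℝ × ℝ | 0 ≤ f.1 ∧ f.1 ≤ dL ∧ 0 ≤ f.2.1 ∧ f.2.1 ≤ dH ∧
      0 ≤ f.2.2 ∧ f.2.2 ≤ dA ∧ f.1 + f.2.1 + μ * f.2.2 = Φ} :=
    ((isCompact_Icc.prod (isCompact_Icc.prod isCompact_Icc)).of_isClosed_subset hclosed hsub)
  obtain ⟨m, hmS, hmmax⟩ := hcpt.exists_isMaxOn hne (continuous_fst.continuousOn)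
  obtain ⟨hm1, hm2, hm3, hm4, hm5, hm6, hm7⟩ := hmS
  set M := m.1 with hM
  have hμne : μ ≠ 0 := hμ0.ne'
  rcases le_or_gt 0 (nLO - μ * nHO) with hc | hc
  · -- case nLO ≥ μ nHO : minimize f₃
    set q : ℝ := max 0 ((Φ - M - dH) / μ) with hq
    have hq0 : 0 ≤ q := le_max_left _ _
    have hqm3 : q ≤ m.2.2 := by
      apply max_le hm5
      rw [div_le_iff₀ hμ0]
      nlinarith [hm7]
    have hμq1 : μ * q ≤ Φ - M := by
      rcases max_cases (0:ℝ) ((Φ - M - dH) / μ) with ⟨he, _⟩ | ⟨he, _⟩ <;> rw [hq, he]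
      · nlinarith [hm7]
      · rw [mul_div_cancel₀ _ hμne]; nlinarith [hm4]
    have hμq2 : Φ - M - dH ≤ μ * q := by
      have h : (Φ - M - dH) / μ ≤ q := le_max_right _ _
      calc Φ - M - dH = μ * ((Φ - M - dH) / μ) := by field_simp
      _ ≤ μ * q := by nlinarith
    refine ⟨(M, Φ - M - μ * q, q), ⟨hm1, hm2, by simpa using le_of_sub_nonneg (by linarith),
      ?_, hq0, hqm3.trans hm6, by show M + (Φ - M - μ * q) + μ * q = Φ; ring⟩,
      fun f hf => hmmax hf, ?_⟩
    · show Φ - M - μ * q ≤ dH; linarith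
    · rintro f ⟨hf1, hf2, hf3, hf4, hf5, hf6, hf7⟩
      have hfl : f.1 ≤ M := hmmax ⟨hf1, hf2, hf3, hf4, hf5, hf6, hf7⟩
      have hq3 : q ≤ f.2.2 := by
        apply max_le hf5
        rw [div_le_iff₀ hμ0]
        nlinarith [hf4]
      have hkey : 0 ≤ (nLO - nHO) * (f.1 - M) + (nLO - μ * nHO) * (f.2.2 - q) := by
        nlinarith
      simp only
      have heq : ((nLO * (M + q) + nHO * ((Φ - M - μ * q) + dvAVHO)) * D1v
          + (nLO * ((dL - M) + (dA - q)) + nHO * (dH - (Φ - M - μ * q))) * (D1v + τ))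
          - ((nLO * (f.1 + f.2.2) + nHO * (f.2.1 + dvAVHO)) * D1v
          + (nLO * ((dL - f.1) + (dA - f.2.2)) + nHO * (dH - f.2.1)) * (D1v + τ))
          = τ * ((nLO - nHO) * (f.1 - M) + (nLO - μ * nHO) * (f.2.2 - q)) := by
        linear_combination (τ * nHO) * hf7
      linarith [heq, mul_nonneg hτ.le hkey]
  · -- case nLO < μ nHO : maximize f₃
    set q : ℝ := min dA ((Φ - M) / μ) with hq
    have hm3q : m.2.2 ≤ q := by
      apply le_min hm6
      rw [le_div_iff₀ hμ0]
      nlinarith [hm7, hm3]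
    have hμq1 : μ * q ≤ Φ - M := by
      have h : q ≤ (Φ - M) / μ := min_le_right _ _
      calc μ * q ≤ μ * ((Φ - M) / μ) := by nlinarith
      _ = Φ - M := by field_simp
    have hμq2 : μ * m.2.2 ≤ μ * q := by nlinarith
    refine ⟨(M, Φ - M - μ * q, q), ⟨hm1, hm2, ?_, ?_, le_trans hm5 hm3q, min_le_left _ _,
      by show M + (Φ - M - μ * q) + μ * q = Φ; ring⟩,
      fun f hf => hmmax hf, ?_⟩
    · show (0:ℝ) ≤ Φ - M - μ * q; linarith
    · show Φ - M - μ * q ≤ dH; nlinarith [hm7, hm4]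
    · rintro f ⟨hf1, hf2, hf3, hf4, hf5, hf6, hf7⟩
      have hfl : f.1 ≤ M := hmmax ⟨hf1, hf2, hf3, hf4, hf5, hf6, hf7⟩
      have hkey : 0 ≤ (nLO - nHO) * (f.1 - M) + (nLO - μ * nHO) * (f.2.2 - q) := by
        rcases min_cases dA ((Φ - M) / μ) with ⟨he, _⟩ | ⟨he, _⟩
        · rw [hq, he]
          nlinarith [hf6]
        · have hq' : μ * q = Φ - M := by rw [hq, he, mul_div_cancel₀ _ hμne]
          have hΔ3 : μ * (f.2.2 - q) ≤ M - f.1 := by nlinarith [hf3]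
          nlinarith [mul_nonneg (sub_nonneg.2 hfl)
            (mul_nonneg hnLO.le (by linarith : (0:ℝ) ≤ 1 - μ))]
      simp only
      have heq : ((nLO * (M + q) + nHO * ((Φ - M - μ * q) + dvAVHO)) * D1v
          + (nLO * ((dL - M) + (dA - q)) + nHO * (dH - (Φ - M - μ * q))) * (D1v + τ))
          - ((nLO * (f.1 + f.2.2) + nHO * (f.2.1 + dvAVHO)) * D1v
          + (nLO * ((dL - f.1) + (dA - f.2.2)) + nHO * (dH - f.2.1)) * (D1v + τ))
          = τ * ((nLO - nHO) * (f.1 - M) + (nLO - μ * nHO) * (f.2.2 - q)) := by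
        linear_combination (τ * nHO) * hf7
      linarith [heq, mul_nonneg hτ.le hkey]
end
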